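/- Suppose α ∈ (0,1), σ = 1-α/2, η is the unique positive root of 1-3ρ²(1+ρ)=0, and w: [Δt, T] → ℝ satisfies |t^{-α} - w(t)| ≤ ε on [Δt, T] with w(t) = Σ_{ℓ=1}^{N_q} ϖ_ℓ e^{-θ_ℓ t}, ϖ_ℓ, θ_ℓ > 0. If στ₂ ≥ Δt, στ₂ ≤ T, ρ₂ = τ₂/τ₁ ≥ η, and ε ≤ 1/(5(1-α)(στ₁)^α), then σ^{1-α}/((1-α)τ₁^α) - (1/2)Σ_ℓ ϖ_ℓ e^{-θ_ℓ στ₂} ≥ (1/(2(1-α)(στ₁)^α))·(2-α-(1-α)η^{-α}) - ε/2 > 0. -/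

import Mathlib

open Real

/-!
Since `σ^{1-α} = σ · σ^{-α}` and `σ = (2-α)/2`, the first term equals `(2-α)/(2(1-α)(στ₁)^α)`.
The exponential sum is at most `(στ₂)^{-α} + ε ≤ η^{-α}/(στ₁)^α + ε`, because `τ₂ ≥ ητ₁`,
which gives the lower bound. For its positivity, `η > 2/5` together with Bernoulli's inequality
`η^{-α} ≤ 1 + α(η⁻¹ - 1)` gives `2 - α - (1-α)η^{-α} ≥ 1 - (η⁻¹ - 1)/4 ≥ 3/5`, which beats the
`ε/2 ≤ 1/(10(1-α)(στ₁)^α)` allowed by the hypothesis on `ε`.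
-/
lemma rpow_neg_le_one_add_mul_inv_sub_one {x a : ℝ} (hx : 0 < x) (ha0 : 0 ≤ a) (ha1 : a ≤ 1) :
    x ^ (-a) ≤ 1 + a * (x⁻¹ - 1) := by
  have hber := rpow_one_add_le_one_add_mul_self (by linarith [inv_pos.2 hx] : (-1 : ℝ) ≤ x⁻¹ - 1)
    ha0 ha1
  rwa [add_sub_cancel, inv_rpow hx.le, ← rpow_neg hx.le] at hber

lemma two_fifths_lt_of_cubic_root {η : ℝ} (hη : 0 < η) (hroot : 1 - 3 * η ^ 2 * (1 + η) = 0) :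
    2 / 5 < η := by
  by_contra! h
  nlinarith [mul_le_mul h h hη.le (by norm_num)]

lemma three_fifths_le_two_sub_sub_mul_rpow_neg {α η : ℝ} (hα0 : 0 < α) (hα1 : α < 1)
    (hη : 2 / 5 ≤ η) : 3 / 5 ≤ 2 - α - (1 - α) * η ^ (-α) := by
  have hbern := rpow_neg_le_one_add_mul_inv_sub_one (by linarith) hα0.le hα1.le (x := η)
  have hinv : η⁻¹ ≤ 5 / 2 := by
    rw [inv_le_comm₀ (by linarith) (by norm_num)]; linarith
  nlinarith [mul_le_mul_of_nonneg_left hbern (by linarith : 0 ≤ 1 - α),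
    mul_le_mul_of_nonneg_left hinv (by nlinarith : 0 ≤ α * (1 - α)), sq_nonneg (α - 1 / 2)]

lemma rpow_neg_mul_le_div_rpow {s τ₁ τ₂ η α : ℝ} (hs : 0 < s) (hτ₁ : 0 < τ₁) (hη : 0 < η)
    (hα : 0 ≤ α) (hρ : η ≤ τ₂ / τ₁) : (s * τ₂) ^ (-α) ≤ η ^ (-α) / (s * τ₁) ^ α := by
  have hle : s * τ₁ * η ≤ s * τ₂ := by
    rw [mul_assoc]; gcongr; rwa [le_div_iff₀' hτ₁] at hρ
  calc (s * τ₂) ^ (-α) ≤ (s * τ₁ * η) ^ (-α) :=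
        rpow_le_rpow_of_nonpos (by positivity) hle (by linarith)
    _ = η ^ (-α) / (s * τ₁) ^ α := by
        rw [mul_rpow (by positivity) hη.le, rpow_neg (by positivity)]; ring

lemma rpow_one_sub_div_eq {α σ τ : ℝ} (hα : α < 2) (hσ : σ = 1 - α / 2) (hτ : 0 < τ) :
    σ ^ (1 - α) / ((1 - α) * τ ^ α) = (2 - α) / (2 * (1 - α) * (σ * τ) ^ α) := by
  have hσpos : 0 < σ := by rw [hσ]; linarith
  rw [rpow_sub hσpos, rpow_one, mul_rpow hσpos.le hτ.le, hσ]
  field_simp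

theorem stmt_13_general (α σ η ε Δt T τ1 τ2 : ℝ) (Nq : ℕ) (ϖ θ : Fin Nq → ℝ)
    (hα0 : 0 < α) (hα1 : α < 1) (hσ : σ = 1 - α / 2)
    (hηpos : 0 < η) (hηroot : 1 - 3 * η ^ 2 * (1 + η) = 0)
    (hτ1 : 0 < τ1)
    (happrox : ∀ t : ℝ, Δt ≤ t → t ≤ T →
      |t ^ (-α) - ∑ l, ϖ l * Real.exp (-(θ l) * t)| ≤ ε)
    (h1 : Δt ≤ σ * τ2) (h2 : σ * τ2 ≤ T) (hρ : η ≤ τ2 / τ1)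
    (hε : ε ≤ 1 / (5 * (1 - α) * (σ * τ1) ^ α)) :
    σ ^ (1 - α) / ((1 - α) * τ1 ^ α) -
        (1 / 2) * ∑ l, ϖ l * Real.exp (-(θ l) * (σ * τ2))
      ≥ 1 / (2 * (1 - α) * (σ * τ1) ^ α) * (2 - α - (1 - α) * η ^ (-α)) - ε / 2 ∧
    0 < 1 / (2 * (1 - α) * (σ * τ1) ^ α) * (2 - α - (1 - α) * η ^ (-α)) - ε / 2 := by
  have hσ0 : 0 < σ := by rw [hσ]; linarith
  have hA : 0 < (σ * τ1) ^ α := by positivity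
  have hw : ∑ l, ϖ l * Real.exp (-(θ l) * (σ * τ2)) ≤ η ^ (-α) / (σ * τ1) ^ α + ε := by
    have := (abs_le.1 (happrox _ h1 h2)).1
    linarith [rpow_neg_mul_le_div_rpow hσ0 hτ1 hηpos hα0.le hρ]
  have hK := three_fifths_le_two_sub_sub_mul_rpow_neg hα0 hα1
    (two_fifths_lt_of_cubic_root hηpos hηroot).le
  have h1α : 0 < 1 - α := by linarith
  constructor
  · have hsplit : 1 / (2 * (1 - α) * (σ * τ1) ^ α) * (2 - α - (1 - α) * η ^ (-α)) =
        (2 - α) / (2 * (1 - α) * (σ * τ1) ^ α) - η ^ (-α) / (σ * τ1) ^ α / 2 := by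
      field_simp
    rw [rpow_one_sub_div_eq (by linarith) hσ hτ1, hsplit]
    linarith
  · set c := 1 / ((1 - α) * (σ * τ1) ^ α) with hc
    have hc0 : 0 < c := by positivity
    have hhalf : 1 / (2 * (1 - α) * (σ * τ1) ^ α) = c / 2 := by rw [hc]; field_simp
    have hfifth : 1 / (5 * (1 - α) * (σ * τ1) ^ α) = c / 5 := by rw [hc]; field_simp
    rw [hhalf]
    rw [hfifth] at hε
    linarith [mul_le_mul_of_nonneg_left hK (half_pos hc0).le]

/-- Positivity of the first diagonal entry `[B]₁₁`. Suppose `α ∈ (0,1)`,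
`σ = 1-α/2`, `η` the unique positive root of `1-3ρ²(1+ρ)=0`, and
`w(t) = Σ_ℓ ϖ_ℓ e^{-θ_ℓ t}` (with `ϖ_ℓ, θ_ℓ > 0`) satisfies `|t^{-α} - w(t)| ≤ ε`
on `[Δt, T]`. If `στ₂ ∈ [Δt, T]`, `τ₂/τ₁ ≥ η`, and `ε ≤ 1/(5(1-α)(στ₁)^α)`, then
`σ^{1-α}/((1-α)τ₁^α) - (1/2)Σ_ℓ ϖ_ℓ e^{-θ_ℓ στ₂}
  ≥ (1/(2(1-α)(στ₁)^α))·(2-α-(1-α)η^{-α}) - ε/2 > 0`. -/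
theorem stmt_13 (α σ η ε Δt T τ1 τ2 : ℝ) (Nq : ℕ) (ϖ θ : Fin Nq → ℝ)
    (hα0 : 0 < α) (hα1 : α < 1) (hσ : σ = 1 - α / 2)
    (hηpos : 0 < η) (hηroot : 1 - 3 * η ^ 2 * (1 + η) = 0)
    (hτ1 : 0 < τ1) (hτ2 : 0 < τ2)
    (hϖ : ∀ l, 0 < ϖ l) (hθ : ∀ l, 0 < θ l)
    (happrox : ∀ t : ℝ, Δt ≤ t → t ≤ T →
      |t ^ (-α) - ∑ l, ϖ l * Real.exp (-(θ l) * t)| ≤ ε)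
    (h1 : Δt ≤ σ * τ2) (h2 : σ * τ2 ≤ T) (hρ : η ≤ τ2 / τ1)
    (hε : ε ≤ 1 / (5 * (1 - α) * (σ * τ1) ^ α)) :
    σ ^ (1 - α) / ((1 - α) * τ1 ^ α) -
        (1 / 2) * ∑ l, ϖ l * Real.exp (-(θ l) * (σ * τ2))
      ≥ 1 / (2 * (1 - α) * (σ * τ1) ^ α) * (2 - α - (1 - α) * η ^ (-α)) - ε / 2 ∧
    0 < 1 / (2 * (1 - α) * (σ * τ1) ^ α) * (2 - α - (1 - α) * η ^ (-α)) - ε / 2 :=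
  stmt_13_general α σ η ε Δt T τ1 τ2 Nq ϖ θ hα0 hα1 hσ hηpos hηroot hτ1 happrox h1 h2 hρ hε
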